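/- For each n ≥ 1, E_n = −i (1+i)^{1−n} A_n(i), where A_n(t) = Σ_{σ∈S_n} t^{1+des(σ)} is the Eulerian polynomial and i is the imaginary unit. -/

import Mathlib

open Finset

/-- The Euler numbers `E n`, defined as the Taylor coefficients (times `n!`)
of `tan x + sec x` at `0`, i.e. `E n = (d/dx)^n (tan x + sec x) |_{x=0}`. -/
noncomputable def eulerE (n : ℕ) : ℝ :=
  iteratedDeriv n (fun x : ℝ => Real.tan x + (Real.cos x)⁻¹) 0

/-- The word `σ_1 ⋯ σ_n` extended by the boundary convention `σ_0 = σ_{n+1} = +∞`,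
encoded with values in `{0, …, n-1}` and `n` playing the role of `+∞`. -/
def extWord (n : ℕ) (σ : Equiv.Perm (Fin n)) (j : ℕ) : ℕ :=
  if h : 1 ≤ j ∧ j - 1 < n then (σ ⟨j - 1, h.2⟩ : ℕ) else n

/-- number of peaks of `σ` (positions `j ∈ {1,…,n}` with `σ_{j-1} < σ_j > σ_{j+1}`). -/
def pk (n : ℕ) (σ : Equiv.Perm (Fin n)) : ℕ :=
  ((Finset.Icc 1 n).filter (fun j =>
    extWord n σ (j-1) < extWord n σ j ∧ extWord n σ (j+1) < extWord n σ j)).card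

/-- number of valleys of `σ` (positions `j ∈ {1,…,n}` with `σ_{j-1} > σ_j < σ_{j+1}`). -/
def valy (n : ℕ) (σ : Equiv.Perm (Fin n)) : ℕ :=
  ((Finset.Icc 1 n).filter (fun j =>
    extWord n σ j < extWord n σ (j-1) ∧ extWord n σ j < extWord n σ (j+1))).card

/-- number of double ascents of `σ` (positions `j ∈ {1,…,n}` with `σ_{j-1} < σ_j < σ_{j+1}`). -/
def da (n : ℕ) (σ : Equiv.Perm (Fin n)) : ℕ :=
  ((Finset.Icc 1 n).filter (fun j =>
    extWord n σ (j-1) < extWord n σ j ∧ extWord n σ j < extWord n σ (j+1))).card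

/-- number of peaks among positions `j ∈ {2,…,n}`. -/
def pk2 (n : ℕ) (σ : Equiv.Perm (Fin n)) : ℕ :=
  ((Finset.Icc 2 n).filter (fun j =>
    extWord n σ (j-1) < extWord n σ j ∧ extWord n σ (j+1) < extWord n σ j)).card

/-- number of double ascents among positions `j ∈ {2,…,n}`. -/
def da2 (n : ℕ) (σ : Equiv.Perm (Fin n)) : ℕ :=
  ((Finset.Icc 2 n).filter (fun j =>
    extWord n σ (j-1) < extWord n σ j ∧ extWord n σ j < extWord n σ (j+1))).card

/-- number of ascents of `σ` among positions `1,…,n-1` (`σ_j < σ_{j+1}`). -/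
def asc (n : ℕ) (σ : Equiv.Perm (Fin n)) : ℕ :=
  ((Finset.Icc 1 (n-1)).filter (fun j => extWord n σ j < extWord n σ (j+1))).card

/-- number of descents of `σ` among positions `1,…,n-1` (`σ_j > σ_{j+1}`). -/
def des (n : ℕ) (σ : Equiv.Perm (Fin n)) : ℕ :=
  ((Finset.Icc 1 (n-1)).filter (fun j => extWord n σ (j+1) < extWord n σ j)).card


/-!
Write `D_n(t) = ∑_{σ ∈ S_n} t^{des σ}`, so that the right-hand side is `(1+i)^{1-n} D_n(i)`.
Cutting a permutation of an `(n+1)`-set at its largest letter leaves an arrangement of a subset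
`A` of the other letters followed by one of its complement, and creates one extra descent unless
the complement is empty. As `des` only sees relative order, this gives
`D_{n+1}(t) = ∑_j C(n,j) D_j(t) D_{n-j}(t) t^{[j < n]}`.
On the other side `f = tan + sec` satisfies `2f' = 1 + f²`, so Leibniz' rule gives
`2E_{n+1} = ∑_j C(n,j) E_j E_{n-j}` for `n ≥ 1`. Since `(1+i)² = 2i`, both recurrences are
matched by `D_{n+1}(i) = (1+i)^n E_{n+1}`.
-/

namespace List

variable {α β : Type*} [LinearOrder α] [LinearOrder β]

def numDescents : List α → ℕ
  | a :: b :: l => (if b < a then 1 else 0) + numDescents (b :: l)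
  | _ => 0

@[simp] lemma numDescents_nil : numDescents ([] : List α) = 0 := rfl

@[simp] lemma numDescents_singleton (a : α) : numDescents [a] = 0 := rfl

lemma numDescents_cons_cons (a b : α) (l : List α) :
    numDescents (a :: b :: l) = (if b < a then 1 else 0) + numDescents (b :: l) := rfl

lemma numDescents_map {f : α → β} (hf : StrictMono f) (l : List α) :
    numDescents (l.map f) = numDescents l := by
  induction l with
  | nil => rfl
  | cons a l ih =>
    cases l with
    | nil => rfl
    | cons b l => simp only [map_cons, numDescents_cons_cons, hf.lt_iff_lt] at ih ⊢; rw [ih]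

lemma numDescents_cons_of_forall_lt {m : α} {l : List α} (h : ∀ x ∈ l, x < m) :
    numDescents (m :: l) = numDescents l + if l = [] then 0 else 1 := by
  cases l with
  | nil => rfl
  | cons b l => simp [numDescents_cons_cons, h b (by simp), add_comm]

lemma numDescents_append_cons_of_forall_lt {m : α} {l₁ l₂ : List α}
    (h₁ : ∀ x ∈ l₁, x < m) (h₂ : ∀ x ∈ l₂, x < m) :
    numDescents (l₁ ++ m :: l₂) = numDescents l₁ + numDescents l₂ + if l₂ = [] then 0 else 1 := by
  induction l₁ with
  | nil => simp [numDescents_cons_of_forall_lt h₂]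
  | cons a l₁ ih =>
    specialize ih fun x hx => h₁ x (mem_cons_of_mem a hx)
    have ha : a < m := h₁ a mem_cons_self
    cases l₁ with
    | nil => simp [numDescents_cons_cons, ha.not_gt, numDescents_cons_of_forall_lt h₂]
    | cons b l₁ => simp only [cons_append, numDescents_cons_cons] at ih ⊢; omega

lemma numDescents_ofFn {n : ℕ} (f : Fin (n + 1) → α) :
    numDescents (ofFn f) = #{i : Fin n | f i.succ < f i.castSucc} := by
  induction n with
  | zero => simp
  | succ n ih =>
    rw [ofFn_succ, ofFn_succ, numDescents_cons_cons, ← ofFn_succ (f := fun i => f i.succ), ih,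
      Fin.card_filter_univ_succ]
    simp only [Fin.castSucc_zero, Fin.succ_castSucc, Fin.succ_zero_eq_one]
    by_cases h : f 1 < f 0 <;> simp [h, add_comm]

end List

namespace Finset

variable {α β : Type*}

def arrangements (S : Finset α) : Finset (List α) :=
  ⟨S.val.lists, Multiset.lists_nodup_finset S⟩

lemma mem_arrangements [DecidableEq α] {S : Finset α} {l : List α} :
    l ∈ S.arrangements ↔ l.Nodup ∧ l.toFinset = S := by
  simp only [arrangements, mem_mk, Multiset.mem_lists_iff, Multiset.quot_mk_to_coe]
  constructor
  · intro h
    have hl : l.Nodup := by simpa [h] using S.nodup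
    exact ⟨hl, by rw [← val_inj, List.toFinset_val, hl.dedup, h]⟩
  · rintro ⟨hl, rfl⟩
    rw [List.toFinset_val, hl.dedup]

lemma arrangements_map_val (f : α ↪ β) (S : Finset α) :
    (S.map f).arrangements.val = S.arrangements.val.map (List.map f) := by
  obtain ⟨s, hs⟩ := S
  induction s using Quotient.inductionOn
  simp [arrangements, List.map_permutations]

variable [DecidableEq α] {m : α} {T : Finset α}

lemma append_cons_mem_arrangements_insert (hm : m ∉ T) {l₁ l₂ : List α} :
    l₁ ++ m :: l₂ ∈ (insert m T).arrangements ↔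
      l₁.toFinset ⊆ T ∧ l₁ ∈ l₁.toFinset.arrangements ∧ l₂ ∈ (T \ l₁.toFinset).arrangements := by
  simp only [mem_arrangements, List.nodup_cons, List.nodup_append, Finset.ext_iff, subset_iff,
    List.mem_toFinset, List.toFinset_append, List.toFinset_cons, mem_union, mem_insert, mem_sdiff]
  grind

lemma sum_arrangements_insert {M : Type*} [AddCommMonoid M] (hm : m ∉ T) (g : List α → M) :
    ∑ l ∈ (insert m T).arrangements, g l =
      ∑ x ∈ T.powerset.sigma fun A => A.arrangements ×ˢ (T \ A).arrangements,
        g (x.2.1 ++ m :: x.2.2) := by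
  symm
  refine sum_bij (fun x _ => x.2.1 ++ m :: x.2.2) ?_ ?_ ?_ fun _ _ => rfl
  · rintro ⟨A, l₁, l₂⟩ hx
    simp only [mem_sigma, mem_powerset, mem_product] at hx
    obtain ⟨hA, hl₁, hl₂⟩ := hx
    obtain rfl := (mem_arrangements.1 hl₁).2
    exact (append_cons_mem_arrangements_insert hm).2 ⟨hA, hl₁, hl₂⟩
  · rintro ⟨A, l₁, l₂⟩ hx ⟨B, k₁, k₂⟩ hy h
    simp only [mem_sigma, mem_powerset, mem_product, mem_arrangements] at hx hy h
    obtain ⟨hA, ⟨-, rfl⟩, -, hl₂⟩ := hx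
    obtain ⟨-, ⟨-, rfl⟩, -⟩ := hy
    have hm₁ : m ∉ l₁ := fun h => hm (hA (List.mem_toFinset.2 h))
    have hm₂ : m ∉ l₂ := fun h => hm (mem_sdiff.1 (hl₂ ▸ List.mem_toFinset.2 h)).1
    obtain ⟨rfl, -, rfl⟩ := (List.append_cons_inj_of_notMem hm₁ hm₂).1 h
    rfl
  · intro l hl
    have hml : m ∈ l := List.mem_toFinset.1 ((mem_arrangements.1 hl).2 ▸ mem_insert_self m T)
    obtain ⟨l₁, l₂, rfl⟩ := List.append_of_mem hml
    obtain ⟨hA, hl₁, hl₂⟩ := (append_cons_mem_arrangements_insert hm).1 hl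
    refine ⟨⟨l₁.toFinset, l₁, l₂⟩, ?_, rfl⟩
    simp only [mem_sigma, mem_powerset, mem_product]
    exact ⟨hA, hl₁, hl₂⟩

end Finset

section DescentSum

variable {α β R : Type*} [LinearOrder α] [LinearOrder β] [CommSemiring R] (t : R)

def descentSum (S : Finset α) : R :=
  ∑ l ∈ S.arrangements, t ^ l.numDescents

lemma descentSum_map (f : α ↪o β) (S : Finset α) :
    descentSum t (S.map f.toEmbedding) = descentSum t S := by
  rw [descentSum, descentSum, sum_eq_multiset_sum, sum_eq_multiset_sum, arrangements_map_val,
    Multiset.map_map]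
  congr 1
  exact Multiset.map_congr rfl fun l _ => by simp [List.numDescents_map f.strictMono]

lemma descentSum_eq_univ_fin (S : Finset α) :
    descentSum t S = descentSum t (univ : Finset (Fin #S)) := by
  conv_lhs => rw [← S.map_orderEmbOfFin_univ rfl, descentSum_map]

lemma descentSum_insert_of_forall_lt {m : α} {T : Finset α} (hT : ∀ x ∈ T, x < m) :
    descentSum t (insert m T) = ∑ A ∈ T.powerset,
      descentSum t A * descentSum t (T \ A) * if A = T then 1 else t := by
  rw [descentSum, sum_arrangements_insert (fun h => (hT m h).false), sum_sigma]
  refine sum_congr rfl fun A hA => ?_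
  rw [mem_powerset] at hA
  rw [sum_product, descentSum, descentSum, sum_mul_sum, sum_mul]
  refine sum_congr rfl fun l₁ hl₁ => ?_
  rw [sum_mul]
  refine sum_congr rfl fun l₂ hl₂ => ?_
  obtain ⟨-, rfl⟩ := mem_arrangements.1 hl₁
  obtain ⟨-, hl₂⟩ := mem_arrangements.1 hl₂
  have hl₂_nil : l₂ = [] ↔ l₁.toFinset = T := by
    rw [← List.toFinset_eq_empty_iff, hl₂, sdiff_eq_empty_iff_subset]
    exact ⟨hA.antisymm, fun h => h.ge⟩
  have h₁ : ∀ x ∈ l₁, x < m := fun x hx => hT x (hA (List.mem_toFinset.2 hx))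
  have h₂ : ∀ x ∈ l₂, x < m := fun x hx => hT x (mem_sdiff.1 (hl₂ ▸ List.mem_toFinset.2 hx)).1
  simp only [List.numDescents_append_cons_of_forall_lt h₁ h₂, pow_add, hl₂_nil]
  split_ifs <;> simp

end DescentSum

section PermDescentSum

variable {R : Type*} [CommSemiring R] (t : R)

def permDescentSum (n : ℕ) : R :=
  ∑ σ : Equiv.Perm (Fin n), t ^ (List.ofFn σ).numDescents

lemma descentSum_univ_fin (n : ℕ) :
    descentSum t (univ : Finset (Fin n)) = permDescentSum t n := by
  symm
  refine sum_bij (fun σ _ => List.ofFn σ) (fun σ _ => ?_)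
    (fun σ _ τ _ h => Equiv.ext (congrFun (List.ofFn_injective h))) (fun l hl => ?_)
    fun _ _ => rfl
  · rw [mem_arrangements, List.nodup_ofFn]
    exact ⟨σ.injective, eq_univ_of_forall fun i => by simpa using σ.surjective i⟩
  · obtain ⟨hnd, hl⟩ := mem_arrangements.1 hl
    have hall : ∀ i, i ∈ l := fun i => List.mem_toFinset.1 (hl ▸ mem_univ i)
    have hlen : l.length = n := by simpa [hl] using (List.toFinset_card_of_nodup hnd).symm
    refine ⟨(finCongr hlen.symm).trans (hnd.getEquivOfForallMemList l hall), mem_univ _, ?_⟩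
    refine List.ext_get (by simp [hlen]) fun i h₁ h₂ => ?_
    simp

lemma permDescentSum_zero : permDescentSum t 0 = 1 := by
  simp [permDescentSum]

lemma permDescentSum_succ (n : ℕ) :
    permDescentSum t (n + 1) = ∑ j ∈ range (n + 1),
      n.choose j • (permDescentSum t j * permDescentSum t (n - j) * if j = n then 1 else t) := by
  set T : Finset (Fin (n + 1)) := univ.erase (Fin.last n)
  have hT : ∀ x ∈ T, x < Fin.last n := fun x hx => Fin.lt_last_iff_ne_last.2 (ne_of_mem_erase hx)
  have hTcard : #T = n := by simp [T]
  have hsummand : ∀ A ∈ T.powerset, descentSum t A * descentSum t (T \ A) * (if A = T then 1 else t)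
      = permDescentSum t #A * permDescentSum t (n - #A) * if #A = n then 1 else t := by
    intro A hA
    rw [mem_powerset] at hA
    rw [descentSum_eq_univ_fin t A, descentSum_eq_univ_fin t (T \ A), card_sdiff_of_subset hA,
      hTcard, descentSum_univ_fin, descentSum_univ_fin]
    congr 2
    exact propext ⟨fun h => h ▸ hTcard, fun h => eq_of_subset_of_card_le hA (by omega)⟩
  rw [← descentSum_univ_fin, ← insert_erase (mem_univ (Fin.last n)),
    descentSum_insert_of_forall_lt t hT, sum_congr rfl hsummand,
    sum_powerset_apply_card fun j =>
      permDescentSum t j * permDescentSum t (n - j) * if j = n then 1 else t, hTcard]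

lemma permDescentSum_add_two (n : ℕ) :
    permDescentSum t (n + 2) = (1 + t) * permDescentSum t (n + 1) +
      t * ∑ k ∈ range n,
        (n + 1).choose (k + 1) • (permDescentSum t (k + 1) * permDescentSum t (n - k)) := by
  have hmid : ∀ k ∈ range n, (n + 1).choose (k + 1) • (permDescentSum t (k + 1) *
      permDescentSum t (n + 1 - (k + 1)) * if k + 1 = n + 1 then 1 else t) =
      t * (n + 1).choose (k + 1) • (permDescentSum t (k + 1) * permDescentSum t (n - k)) := by
    intro k hk
    rw [if_neg (by rw [mem_range] at hk; omega), Nat.add_sub_add_right, mul_smul_comm, mul_comm t,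
      mul_assoc]
  rw [permDescentSum_succ, sum_range_succ, sum_range_succ', sum_congr rfl hmid, ← mul_sum]
  simp only [Nat.choose_zero_right, Nat.choose_self, one_smul, Nat.sub_zero, Nat.sub_self,
    permDescentSum_zero, mul_one, one_mul, if_pos, if_neg (Nat.succ_ne_zero n).symm]
  ring

end PermDescentSum

lemma extWord_succ {n : ℕ} (σ : Equiv.Perm (Fin n)) {j : ℕ} (hj : j < n) :
    extWord n σ (j + 1) = σ ⟨j, hj⟩ := by
  simp [extWord, hj]

lemma des_eq_numDescents {n : ℕ} (σ : Equiv.Perm (Fin n)) :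
    des n σ = (List.ofFn σ).numDescents := by
  cases n with
  | zero => rfl
  | succ n =>
    rw [List.numDescents_ofFn, des, Nat.add_sub_cancel]
    symm
    refine card_bij (fun i _ => (i : ℕ) + 1) (fun i hi => ?_) (fun i _ j _ h => Fin.ext (by omega))
      fun j hj => ?_
    · simp only [mem_filter, mem_univ, true_and, mem_Icc] at hi ⊢
      rw [extWord_succ σ (by omega), extWord_succ σ (by omega)]
      exact ⟨⟨by omega, i.is_lt⟩, hi⟩
    · simp only [mem_filter, mem_Icc] at hj
      obtain ⟨⟨hj₁, hjn⟩, hj⟩ := hj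
      obtain ⟨i, rfl⟩ := Nat.exists_eq_add_of_le' hj₁
      rw [extWord_succ σ (by omega), extWord_succ σ (by omega)] at hj
      exact ⟨⟨i, by omega⟩, by simpa using hj, rfl⟩

section Riccati

open Topology

variable {𝕜 : Type*} [NontriviallyNormedField 𝕜] {f : 𝕜 → 𝕜} {x : 𝕜}

theorem two_mul_iteratedDeriv_succ_of_two_mul_deriv {n : ℕ} (hn : n ≠ 0)
    (hf : ContDiffAt 𝕜 n f x) (h : ∀ᶠ y in 𝓝 x, 2 * deriv f y = 1 + f y ^ 2) :
    2 * iteratedDeriv (n + 1) f x =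
      ∑ i ∈ range (n + 1), n.choose i * iteratedDeriv i f x * iteratedDeriv (n - i) f x := by
  calc 2 * iteratedDeriv (n + 1) f x = iteratedDeriv n (fun y => 2 * deriv f y) x := by
        rw [iteratedDeriv_succ', iteratedDeriv_const_mul_field]
    _ = iteratedDeriv n (fun y => 1 + f y ^ 2) x := Filter.EventuallyEq.iteratedDeriv_eq n h
    _ = iteratedDeriv n (f * f) x := by
        rw [iteratedDeriv_const_add (Nat.pos_of_ne_zero hn)]
        simp only [sq]
        rfl
    _ = _ := iteratedDeriv_mul hf hf

end Riccati

section TanAddSec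

open Real Topology

lemma hasDerivAt_tan_add_inv_cos {x : ℝ} (hx : cos x ≠ 0) :
    HasDerivAt (fun y => tan y + (cos y)⁻¹) ((1 + (tan x + (cos x)⁻¹) ^ 2) / 2) x := by
  refine ((hasDerivAt_tan hx).add ((hasDerivAt_cos x).inv hx)).congr_deriv ?_
  rw [tan_eq_sin_div_cos]
  field_simp
  nlinarith [sin_sq_add_cos_sq x]

lemma eventually_two_mul_deriv_tan_add_inv_cos {x : ℝ} (hx : cos x ≠ 0) :
    ∀ᶠ y in 𝓝 x, 2 * deriv (fun y => tan y + (cos y)⁻¹) y = 1 + (tan y + (cos y)⁻¹) ^ 2 := by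
  filter_upwards [continuous_cos.continuousAt.eventually_ne hx] with y hy
  rw [(hasDerivAt_tan_add_inv_cos hy).deriv]
  ring

lemma contDiffAt_tan_add_inv_cos {n : WithTop ℕ∞} {x : ℝ} (hx : cos x ≠ 0) :
    ContDiffAt ℝ n (fun y => tan y + (cos y)⁻¹) x :=
  (contDiffAt_tan.2 hx).add (contDiff_cos.contDiffAt.inv hx)

lemma eulerE_zero : eulerE 0 = 1 := by
  simp [eulerE]

lemma eulerE_one : eulerE 1 = 1 := by
  have h := (eventually_two_mul_deriv_tan_add_inv_cos (x := 0) (by simp)).self_of_nhds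
  simp only [tan_zero, cos_zero] at h
  rw [eulerE, iteratedDeriv_one]
  linarith

lemma two_mul_eulerE_succ {n : ℕ} (hn : n ≠ 0) :
    2 * eulerE (n + 1) = ∑ i ∈ range (n + 1), n.choose i * eulerE i * eulerE (n - i) :=
  two_mul_iteratedDeriv_succ_of_two_mul_deriv hn (contDiffAt_tan_add_inv_cos (by simp))
    (eventually_two_mul_deriv_tan_add_inv_cos (by simp))

end TanAddSec

lemma two_mul_eulerE_add_two (n : ℕ) :
    2 * eulerE (n + 2) = 2 * eulerE (n + 1) +
      ∑ k ∈ range n, (n + 1).choose (k + 1) * eulerE (k + 1) * eulerE (n - k) := by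
  rw [two_mul_eulerE_succ (n := n + 1) (by omega), sum_range_succ, sum_range_succ']
  simp only [Nat.choose_zero_right, Nat.choose_self, Nat.sub_zero, Nat.sub_self, eulerE_zero,
    Nat.add_sub_add_right, Nat.cast_one, mul_one, one_mul]
  ring

open Complex in
lemma permDescentSum_I_succ (n : ℕ) : permDescentSum I (n + 1) = (1 + I) ^ n * eulerE (n + 1) := by
  induction n using Nat.strong_induction_on with
  | _ n ih =>
  rcases n with _ | m
  · simp [permDescentSum_succ, permDescentSum_zero, eulerE_one]
  have hz : (1 + I) ^ 2 = 2 * I := by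
    rw [add_sq, I_sq]
    ring
  have hmid : ∀ k ∈ range m,
      I * (m + 1).choose (k + 1) • (permDescentSum I (k + 1) * permDescentSum I (m - k)) =
        (1 + I) ^ (m + 1) / 2 * ((m + 1).choose (k + 1) * eulerE (k + 1) * eulerE (m - k)) := by
    intro k hk
    obtain ⟨j, rfl⟩ : ∃ j, m = k + j + 1 := ⟨m - k - 1, by grind⟩
    rw [show k + j + 1 - k = j + 1 by omega, ih k (by omega), ih j (by omega), nsmul_eq_mul]
    linear_combination (-((k + j + 1 + 1).choose (k + 1) * eulerE (k + 1) * eulerE (j + 1) *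
      (1 + I) ^ k * (1 + I) ^ j : ℂ) / 2) * hz
  have hE := congrArg (fun r : ℝ => (r : ℂ)) (two_mul_eulerE_add_two m)
  push_cast at hE
  rw [permDescentSum_add_two, mul_sum, sum_congr rfl hmid, ← mul_sum, ih m (by omega)]
  linear_combination (-(1 + I) ^ (m + 1) / 2) * hE

theorem euler_eq_eulerian_at_i (n : ℕ) (hn : 1 ≤ n) :
    (eulerE n : ℂ) = -Complex.I * (1 + Complex.I) ^ ((1 : ℤ) - n) *
      ∑ σ : Equiv.Perm (Fin n), Complex.I ^ (1 + des n σ) := by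
  obtain ⟨m, rfl⟩ := Nat.exists_eq_add_of_le' hn
  have hz : 1 + Complex.I ≠ 0 := fun h => by simpa using congrArg Complex.im h
  have hsum : ∑ σ : Equiv.Perm (Fin (m + 1)), Complex.I ^ (1 + des (m + 1) σ) =
      Complex.I * permDescentSum Complex.I (m + 1) := by
    simp only [pow_add, pow_one, des_eq_numDescents, ← mul_sum, permDescentSum]
  rw [hsum, permDescentSum_I_succ, show (1 : ℤ) - (m + 1 : ℕ) = -m by push_cast; ring, zpow_neg,
    zpow_natCast]
  field_simp
  linear_combination (eulerE (m + 1) : ℂ) * Complex.I_sq
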